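/- For any N ≥ 2 and the FLATLO displacement function Δm (defined piecewise by parity of N and j as in the advancing algorithm), the sequence Δm(0), Δm(1), ..., Δm(N−1) is strictly decreasing with Δm(N−1) = 0 when N and N−1 have appropriate parities; in particular Δm(i) > Δm(i+1) for all 0 ≤ i < N−1, assuming Δd > 0. -/

import Mathlib

/-! All four parity cases collapse to `Δm(j) = ⌊3 (N - 1 - j) / 2⌋ · Δd` for `j < N`, and
`n ↦ ⌊3n/2⌋` is strictly increasing, its steps alternating between 1 and 2. -/

/-- The advancing algorithm displacement, for `N` aircraft and index `j`. -/
noncomputable def moveForward (N : ℕ) (Δd : ℝ) (j : ℕ) : ℝ :=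
  if Odd N then
    if Odd j then (((N - j) / 2 : ℕ) : ℝ) * Δd + 2 * ((((N - j) / 2 - 1 : ℕ)) : ℝ) * Δd
    else 3 * Δd * (((N - j - 1) / 2 : ℕ) : ℝ)
  else
    if Odd j then 3 * Δd * (((N - j - 1) / 2 : ℕ) : ℝ)
    else (((N - j) / 2 : ℕ) : ℝ) * Δd + 2 * ((((N - j) / 2 - 1 : ℕ)) : ℝ) * Δd

theorem moveForward_eq_of_lt {N j : ℕ} (Δd : ℝ) (hj : j < N) :
    moveForward N Δd j = ((3 * (N - 1 - j) / 2 : ℕ) : ℝ) * Δd := by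
  unfold moveForward
  split_ifs with hNodd hjodd hjodd <;> simp only [Nat.odd_iff] at hNodd hjodd
  · rw [show 3 * (N - 1 - j) / 2 = (N - j) / 2 + 2 * ((N - j) / 2 - 1) by omega]
    push_cast; ring
  · rw [show 3 * (N - 1 - j) / 2 = 3 * ((N - j - 1) / 2) by omega]
    push_cast; ring
  · rw [show 3 * (N - 1 - j) / 2 = 3 * ((N - j - 1) / 2) by omega]
    push_cast; ring
  · rw [show 3 * (N - 1 - j) / 2 = (N - j) / 2 + 2 * ((N - j) / 2 - 1) by omega]
    push_cast; ring

theorem stmt11_general (N : ℕ) (Δd : ℝ) (hΔd : 0 < Δd) :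
    ∀ i : ℕ, i + 1 < N → moveForward N Δd i > moveForward N Δd (i + 1) := by
  intro i hi
  rw [moveForward_eq_of_lt Δd (by omega : i < N), moveForward_eq_of_lt Δd hi]
  have hsteps : 3 * (N - 1 - (i + 1)) / 2 < 3 * (N - 1 - i) / 2 := by omega
  exact mul_lt_mul_of_pos_right (by exact_mod_cast hsteps) hΔd

theorem stmt11 (N : ℕ) (hN : 2 ≤ N) (Δd : ℝ) (hΔd : 0 < Δd) :
    ∀ i : ℕ, i + 1 < N → moveForward N Δd i > moveForward N Δd (i + 1) :=
  stmt11_general N Δd hΔd
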